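/- arXiv:1305.5345 — 7 statements merged into one kernel-verified Lean document; each statement's English description precedes it below -/
import Mathlib

section
/- Let K ⊆ ℝ^d be a nonempty closed set that is regular (i.e., K equals the closure of its interior), nonconvex, and has path-connected interior. Then there exist points x, y, z in the interior of K such that the segment [x,y] lies in the interior of K, the segment [y,z] lies in the interior of K, but the segment [x,z] is not contained in K. -/
/-!
Otherwise any two sides of a triangle in `int K` would force the third side into `K`, and
translating the triangle slightly upgrades this to `int K`. Then `[p, q] ⊆ int K` is an
equivalence relation on `int K` with open classes, so by connectedness `int K` is convex, and
hence so is `K = cl (int K)`.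
-/

open Set Filter Topology

section SegmentTriangle

variable {E : Type*} [AddCommGroup E] [Module ℝ E] [TopologicalSpace E]
  [IsTopologicalAddGroup E] [ContinuousSMul ℝ E]

/-- Tube lemma over the compact parameter interval `[0, 1]`. -/
lemma IsOpen.eventually_segment_subset {U : Set E} (hU : IsOpen U) {x y : E}
    (h : segment ℝ x y ⊆ U) : ∀ᶠ p in 𝓝 (x, y), segment ℝ p.1 p.2 ⊆ U := by
  have hcont : Continuous fun q : (E × E) × ℝ ↦ AffineMap.lineMap q.1.1 q.1.2 q.2 :=
    Continuous.lineMap (by fun_prop) (by fun_prop) (by fun_prop)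
  have hmem : ∀ t ∈ Icc (0 : ℝ) 1, ∀ᶠ q : (E × E) × ℝ in 𝓝 ((x, y), t),
      AffineMap.lineMap q.1.1 q.1.2 q.2 ∈ U := by
    intro t ht
    refine hcont.continuousAt.preimage_mem_nhds (hU.mem_nhds (h ?_))
    rw [segment_eq_image_lineMap]
    exact mem_image_of_mem _ ht
  filter_upwards [isCompact_Icc.eventually_forall_of_forall_eventually
    (P := fun (p : E × E) (t : ℝ) ↦ AffineMap.lineMap p.1 p.2 t ∈ U) hmem] with p hp
  rw [segment_eq_image_lineMap]
  exact image_subset_iff.mpr hp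

lemma IsOpen.eventually_segment_subset_left {U : Set E} (hU : IsOpen U) {x : E} (hx : x ∈ U) :
    ∀ᶠ y in 𝓝 x, segment ℝ x y ⊆ U := by
  have h := hU.eventually_segment_subset (x := x) (y := x) (by simpa using hx)
  exact (continuous_const.prodMk continuous_id).continuousAt.eventually h

/-- Translating the triangle slightly keeps its two sides in `interior K`, so a whole
neighbourhood of each point of the third side lies in `K`. -/
lemma segment_subset_interior_of_triangle {K : Set E}
    (hK : ∀ x y z, segment ℝ x y ⊆ interior K → segment ℝ y z ⊆ interior K →
      segment ℝ x z ⊆ K)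
    {x y z : E} (hxy : segment ℝ x y ⊆ interior K) (hyz : segment ℝ y z ⊆ interior K) :
    segment ℝ x z ⊆ interior K := by
  intro w hw
  rw [mem_interior_iff_mem_nhds]
  have hx : Tendsto (fun q ↦ (q - w + x, y)) (𝓝 w) (𝓝 (x, y)) :=
    Continuous.tendsto' (by fun_prop) w _ (by simp)
  have hz : Tendsto (fun q ↦ (y, q - w + z)) (𝓝 w) (𝓝 (y, z)) :=
    Continuous.tendsto' (by fun_prop) w _ (by simp)
  filter_upwards [hx.eventually (isOpen_interior.eventually_segment_subset hxy),
    hz.eventually (isOpen_interior.eventually_segment_subset hyz)] with q hqx hqz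
  have hq : q - w + w ∈ segment ℝ (q - w + x) (q - w + z) :=
    (mem_segment_translate ℝ (q - w)).mpr hw
  rw [sub_add_cancel] at hq
  exact hK _ y _ hqx hqz hq

/-- `[p, q] ⊆ U` is an equivalence relation on `U` with open classes. -/
lemma IsPreconnected.convex_of_segment_trans {U : Set E} (hU : IsOpen U) (hpc : IsPreconnected U)
    (htrans : ∀ x y z, segment ℝ x y ⊆ U → segment ℝ y z ⊆ U → segment ℝ x z ⊆ U) :
    Convex ℝ U :=
  convex_iff_segment_subset.mpr fun _ hx _ hy ↦
    hpc.induction₂ (fun p q ↦ segment ℝ p q ⊆ U)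
      (fun _ hp ↦ nhdsWithin_le_nhds (hU.eventually_segment_subset_left hp))
      (fun x y z _ _ _ ↦ htrans x y z) (fun x y _ _ h ↦ segment_symm ℝ x y ▸ h) hx hy

end SegmentTriangle

theorem stmt0_general (d : ℕ) (K : Set (EuclideanSpace ℝ (Fin d)))
    (hreg : closure (interior K) = K)
    (hnc : ¬ Convex ℝ K) (hpc : IsPathConnected (interior K)) :
    ∃ x ∈ interior K, ∃ y ∈ interior K, ∃ z ∈ interior K,
      segment ℝ x y ⊆ interior K ∧ segment ℝ y z ⊆ interior K ∧
      ¬ segment ℝ x z ⊆ K := by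
  by_contra! h
  have htriangle : ∀ x y z, segment ℝ x y ⊆ interior K → segment ℝ y z ⊆ interior K →
      segment ℝ x z ⊆ K := fun x y z hxy hyz ↦
    h x (hxy (left_mem_segment ℝ x y)) y (hyz (left_mem_segment ℝ y z))
      z (hyz (right_mem_segment ℝ y z)) hxy hyz
  have hconv : Convex ℝ (interior K) :=
    hpc.isConnected.isPreconnected.convex_of_segment_trans isOpen_interior
      fun _ _ _ ↦ segment_subset_interior_of_triangle htriangle
  exact hnc (hreg ▸ hconv.closure)

/-- Lemma (triangle lemma): a nonempty closed regular nonconvex set with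
path-connected interior contains points `x, y, z` in its interior with
`[x,y], [y,z] ⊆ int K` but `[x,z] ⊄ K`. -/
theorem stmt0 (d : ℕ) (K : Set (EuclideanSpace ℝ (Fin d)))
    (hne : K.Nonempty) (hK : IsClosed K) (hreg : closure (interior K) = K)
    (hnc : ¬ Convex ℝ K) (hpc : IsPathConnected (interior K)) :
    ∃ x ∈ interior K, ∃ y ∈ interior K, ∃ z ∈ interior K,
      segment ℝ x y ⊆ interior K ∧ segment ℝ y z ⊆ interior K ∧
      ¬ segment ℝ x z ⊆ K :=
  stmt0_general d K hreg hnc hpc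
end

section
/- Let K ⊆ ℝ^d be a nonconvex closed set with cl(int K) = K and path-connected interior. Then there exist finitely many points x₀, x₁, …, x_m in int K such that each segment [x_{i-1}, x_i] (for i = 1,…,m) is contained in int K, while the segment [x₀, x_m] is not contained in K. -/
/-!
Perturb the two endpoints of a segment witnessing nonconvexity into `int K`: since `K` is closed
and `K = cl (int K)`, a point of the segment outside `K` survives a small perturbation. The
perturbed endpoints are then joined by a polygonal path in `int K`, because in an open connected
subset of a locally convex space the points reachable by polygonal paths form a clopen set.
-/

open Relation Filter

section Polygonal

variable {E : Type*} [TopologicalSpace E] [AddCommGroup E] [Module ℝ E]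

theorem IsPreconnected.reflTransGen_segment_subset [LocallyConvexSpace ℝ E] {U : Set E}
    (hUc : IsPreconnected U) (hUo : IsOpen U) {a b : E} (ha : a ∈ U) (hb : b ∈ U) :
    ReflTransGen (fun x y => segment ℝ x y ⊆ U) a b := by
  refine hUc.induction₂' _ (fun x hx => ?_) (fun _ _ _ _ _ _ => ReflTransGen.trans) ha hb
  obtain ⟨V, ⟨hVx, hVc⟩, hVU⟩ :=
    (LocallyConvexSpace.convex_basis (𝕜 := ℝ) x).mem_iff.1 (hUo.mem_nhds hx)
  filter_upwards [nhdsWithin_le_nhds hVx] with y hy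
  have hxy : segment ℝ x y ⊆ U := (hVc.segment_subset (mem_of_mem_nhds hVx) hy).trans hVU
  exact ⟨.single hxy, .single (segment_symm ℝ x y ▸ hxy)⟩

theorem exists_mem_interior_segment_not_subset [ContinuousAdd E] [ContinuousSMul ℝ E]
    {K : Set E} (hreg : closure (interior K) = K) (hnc : ¬ Convex ℝ K) :
    ∃ a ∈ interior K, ∃ b ∈ interior K, ¬ segment ℝ a b ⊆ K := by
  obtain ⟨a, haK, b, hbK, hab⟩ : ∃ a ∈ K, ∃ b ∈ K, ¬ segment ℝ a b ⊆ K := by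
    simpa [convex_iff_segment_subset] using hnc
  obtain ⟨z, ⟨s, t, hs, ht, hst, rfl⟩, hzK⟩ := Set.not_subset.1 hab
  let f : E × E → E := fun p => s • p.1 + t • p.2
  have hbad : IsOpen (f ⁻¹' Kᶜ) :=
    (hreg ▸ isClosed_closure).isOpen_compl.preimage (by fun_prop)
  have hab' : (a, b) ∈ closure (interior K ×ˢ interior K) := by
    rw [closure_prod_eq, hreg]
    exact ⟨haK, hbK⟩
  obtain ⟨⟨a', b'⟩, hf, ha', hb'⟩ := mem_closure_iff.1 hab' _ hbad hzK
  exact ⟨a', ha', b', hb', fun h => hf (h ⟨s, t, hs, ht, hst, rfl⟩)⟩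

end Polygonal

theorem Relation.ReflTransGen.exists_relSeries {α : Type*} {r : SetRel α α} {a b : α}
    (h : ReflTransGen (fun x y => (x, y) ∈ r) a b) : ∃ p : RelSeries r, p.head = a ∧ p.last = b := by
  induction h with
  | refl => exact ⟨RelSeries.singleton r a, RelSeries.head_singleton a, RelSeries.last_singleton a⟩
  | tail _ hbc ih =>
    obtain ⟨p, hp, rfl⟩ := ih
    exact ⟨p.snoc _ hbc, by rw [RelSeries.head_snoc, hp], RelSeries.last_snoc ..⟩

theorem stmt1_general (d : ℕ) (K : Set (EuclideanSpace ℝ (Fin d)))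
    (hreg : closure (interior K) = K)
    (hnc : ¬ Convex ℝ K) (hpc : IsPathConnected (interior K)) :
    ∃ (m : ℕ) (x : Fin (m + 1) → EuclideanSpace ℝ (Fin d)),
      (∀ i, x i ∈ interior K) ∧
      (∀ i : Fin m, segment ℝ (x i.castSucc) (x i.succ) ⊆ interior K) ∧
      ¬ segment ℝ (x 0) (x (Fin.last m)) ⊆ K := by
  obtain ⟨a, ha, b, hb, hab⟩ := exists_mem_interior_segment_not_subset hreg hnc
  obtain ⟨p, rfl, rfl⟩ := ReflTransGen.exists_relSeries (r := {q | segment ℝ q.1 q.2 ⊆ interior K})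
    (hpc.isConnected.isPreconnected.reflTransGen_segment_subset isOpen_interior ha hb)
  refine ⟨p.length, p, fun i => ?_, p.step, hab⟩
  cases i using Fin.cases with
  | zero => exact ha
  | succ j => exact p.step j (right_mem_segment ℝ _ _)

/-- A nonempty closed regular nonconvex set with path-connected interior admits a
finite chain `x₀, …, x_m` in its interior whose consecutive segments lie in the
interior while `[x₀, x_m] ⊄ K`. -/
theorem stmt1 (d : ℕ) (K : Set (EuclideanSpace ℝ (Fin d)))
    (hne : K.Nonempty) (hK : IsClosed K) (hreg : closure (interior K) = K)
    (hnc : ¬ Convex ℝ K) (hpc : IsPathConnected (interior K)) :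
    ∃ (m : ℕ) (x : Fin (m + 1) → EuclideanSpace ℝ (Fin d)),
      (∀ i, x i ∈ interior K) ∧
      (∀ i : Fin m, segment ℝ (x i.castSucc) (x i.succ) ⊆ interior K) ∧
      ¬ segment ℝ (x 0) (x (Fin.last m)) ⊆ K :=
  stmt1_general d K hreg hnc hpc
end

section
/- If x₀, x₁, …, x_m (m ≥ 2) is a sequence of points in an open set U ⊆ ℝ^d such that each segment [x_{i-1}, x_i] ⊆ U and [x₀, x_m] ⊄ K for a closed set K ⊇ U, and moreover m is minimal among all such sequences, then m = 2; that is, there exist x, y, z ∈ U with [x,y] ⊆ U, [y,z] ⊆ U, and [x,z] ⊄ K. -/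
/-! If `m ≥ 3`, look at `[x₀, x₂]`. If it lies in `U = int K`, dropping `x₁` gives a shorter
admissible chain. Otherwise it contains a point `w` of the closure of `Kᶜ`, so some `w + v ∉ K`
with `v` arbitrarily small; since `U` is open, `x₀ + v, x₁, x₂ + v` is still a chain in `U`, and
its end segment, the translate of `[x₀, x₂]`, leaves `K`. Both contradict minimality. -/

open Metric

section Segments

variable {E : Type*} [NormedAddCommGroup E] [NormedSpace ℝ E]

theorem IsOpen.exists_pos_segment_subset_of_dist_lt {U : Set E} (hU : IsOpen U) {p q : E}
    (hpq : segment ℝ p q ⊆ U) :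
    ∃ ε > 0, ∀ p' q', dist p' p < ε → dist q' q < ε → segment ℝ p' q' ⊆ U := by
  have hcpt : IsCompact (segment ℝ p q) := by
    simpa only [convexHull_pair] using (Set.toFinite {p, q}).isCompact_convexHull ℝ
  obtain ⟨ε, hε, hsub⟩ := hcpt.exists_thickening_subset_open hU hpq
  refine ⟨ε, hε, fun p' q' hp hq => ?_⟩
  have hconv : Convex ℝ (thickening ε (segment ℝ p q)) := (convex_segment p q).thickening ε
  exact (hconv.segment_subset (mem_thickening_iff.2 ⟨p, left_mem_segment ℝ p q, hp⟩)
    (mem_thickening_iff.2 ⟨q, right_mem_segment ℝ p q, hq⟩)).trans hsub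

theorem exists_segment_not_subset_of_not_subset_interior {K : Set E} {a b c : E}
    (hab : segment ℝ a b ⊆ interior K) (hbc : segment ℝ b c ⊆ interior K)
    (hac : ¬ segment ℝ a c ⊆ interior K) :
    ∃ a' c', segment ℝ a' b ⊆ interior K ∧ segment ℝ b c' ⊆ interior K ∧
      ¬ segment ℝ a' c' ⊆ K := by
  obtain ⟨ε₁, hε₁, hab'⟩ := isOpen_interior.exists_pos_segment_subset_of_dist_lt hab
  obtain ⟨ε₂, hε₂, hbc'⟩ := isOpen_interior.exists_pos_segment_subset_of_dist_lt hbc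
  obtain ⟨w, hw, hwK⟩ := Set.not_subset.1 hac
  have hw_closure : w ∈ closure Kᶜ := by rwa [closure_compl]
  obtain ⟨w', hw'K, hww'⟩ := mem_closure_iff.1 hw_closure _ (lt_min hε₁ hε₂)
  set v := w' - w
  have hv : ‖v‖ < min ε₁ ε₂ := by rwa [← dist_eq_norm, dist_comm]
  refine ⟨v + a, v + c, hab' _ _ ?_ (dist_self b ▸ hε₁), hbc' _ _ (dist_self b ▸ hε₂) ?_, ?_⟩
  · simpa using hv.trans_le (min_le_left _ _)
  · simpa using hv.trans_le (min_le_right _ _)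
  · intro h
    exact hw'K (by simpa [v] using h ((mem_segment_translate ℝ v).2 hw))

end Segments

section Chains

variable {E : Type*} [AddCommGroup E] [Module ℝ E]

def IsSegmentChain (U : Set E) {n : ℕ} (x : Fin (n + 1) → E) : Prop :=
  (∀ i, x i ∈ U) ∧ ∀ i : Fin n, segment ℝ (x i.castSucc) (x i.succ) ⊆ U

theorem IsSegmentChain.comp_succAbove_one {U : Set E} {n : ℕ} {x : Fin (n + 3) → E}
    (hx : IsSegmentChain U x) (h02 : segment ℝ (x 0) (x 2) ⊆ U) :
    IsSegmentChain U (x ∘ Fin.succAbove 1) := by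
  refine ⟨fun i => hx.1 _, fun i => ?_⟩
  induction i using Fin.cases with
  | zero => simpa using h02
  | succ j => simpa [← Fin.succ_castSucc] using hx.2 j.succ.succ

theorem isSegmentChain_three {U : Set E} {a b c : E} (hab : segment ℝ a b ⊆ U)
    (hbc : segment ℝ b c ⊆ U) : IsSegmentChain U ![a, b, c] := by
  refine ⟨fun i => ?_, fun i => ?_⟩
  · fin_cases i
    exacts [hab (left_mem_segment ℝ a b), hbc (left_mem_segment ℝ b c),
      hbc (right_mem_segment ℝ b c)]
  · fin_cases i
    exacts [hab, hbc]

end Chains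

theorem stmt2_general (d : ℕ) (K U : Set (EuclideanSpace ℝ (Fin d)))
    (hU : U = interior K)
    (m : ℕ) (hm : 2 ≤ m) (x : Fin (m + 1) → EuclideanSpace ℝ (Fin d))
    (hmem : ∀ i, x i ∈ U)
    (hseg : ∀ i : Fin m, segment ℝ (x i.castSucc) (x i.succ) ⊆ U)
    (hout : ¬ segment ℝ (x 0) (x (Fin.last m)) ⊆ K)
    (hmin : ∀ (m' : ℕ) (y : Fin (m' + 1) → EuclideanSpace ℝ (Fin d)),
      (∀ i, y i ∈ U) →
      (∀ i : Fin m', segment ℝ (y i.castSucc) (y i.succ) ⊆ U) →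
      ¬ segment ℝ (y 0) (y (Fin.last m')) ⊆ K → m ≤ m') :
    m = 2 ∧ ∃ a ∈ U, ∃ b ∈ U, ∃ c ∈ U,
      segment ℝ a b ⊆ U ∧ segment ℝ b c ⊆ U ∧ ¬ segment ℝ a c ⊆ K := by
  obtain ⟨n, rfl⟩ := Nat.exists_eq_add_of_le' hm
  have hn : n = 0 := by
    subst hU
    by_cases h02 : segment ℝ (x 0) (x 2) ⊆ interior K
    · have hy := IsSegmentChain.comp_succAbove_one ⟨hmem, hseg⟩ h02
      have := hmin (n + 1) _ hy.1 hy.2 (by simpa [← Fin.succ_last] using hout)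
      omega
    · obtain ⟨a, c, hab, hbc, hac⟩ :=
        exists_segment_not_subset_of_not_subset_interior (hseg 0) (by simpa using hseg 1) h02
      have hy := isSegmentChain_three hab hbc
      have := hmin 2 _ hy.1 hy.2 hac
      omega
  subst hn
  exact ⟨rfl, x 0, hmem 0, x 1, hmem 1, x 2, hmem 2, hseg 0, hseg 1, hout⟩

/-- If a chain `x₀, …, x_m` (with `m ≥ 2`) in the open set `U = int K` has all
consecutive segments inside `U` while `[x₀, x_m] ⊄ K`, and `m` is minimal among
all such chains, then `m = 2`; i.e. there are `x, y, z ∈ U` with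
`[x,y] ⊆ U`, `[y,z] ⊆ U`, `[x,z] ⊄ K`. -/
theorem stmt2 (d : ℕ) (K U : Set (EuclideanSpace ℝ (Fin d)))
    (hK : IsClosed K) (hU : U = interior K) (hpc : IsPathConnected U)
    (m : ℕ) (hm : 2 ≤ m) (x : Fin (m + 1) → EuclideanSpace ℝ (Fin d))
    (hmem : ∀ i, x i ∈ U)
    (hseg : ∀ i : Fin m, segment ℝ (x i.castSucc) (x i.succ) ⊆ U)
    (hout : ¬ segment ℝ (x 0) (x (Fin.last m)) ⊆ K)
    (hmin : ∀ (m' : ℕ) (y : Fin (m' + 1) → EuclideanSpace ℝ (Fin d)),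
      (∀ i, y i ∈ U) →
      (∀ i : Fin m', segment ℝ (y i.castSucc) (y i.succ) ⊆ U) →
      ¬ segment ℝ (y 0) (y (Fin.last m')) ⊆ K → m ≤ m') :
    m = 2 ∧ ∃ a ∈ U, ∃ b ∈ U, ∃ c ∈ U,
      segment ℝ a b ⊆ U ∧ segment ℝ b c ⊆ U ∧ ¬ segment ℝ a c ⊆ K :=
  stmt2_general d K U hU m hm x hmem hseg hout hmin
end

section
/- A set K ⊆ ℝ^d is convex if and only if K is connected and locally convex at every point (for every x ∈ K there is an open neighborhood U of x with K ∩ U convex), provided K is closed. -/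
/-!
Connectedness and local convexity make `K` path connected, so two points `x, y ∈ K` are joined
by a path inside a compact piece `C = K ∩ closedBall x R`. A Lebesgue number argument gives
`δ > 0` such that `C` contains the segment between any two of its points at distance `≤ 2δ`,
and sampling the path gives a chain `x = w 0, …, w N = y` in `C` with steps `≤ δ`. Among these
chains (a compact set) take one minimising the energy `∑ ‖w (i + 1) - w i‖²`. Moving an inner
vertex to the midpoint of its neighbours keeps the chain admissible and, by the parallelogram
law, lowers the energy unless the vertex is already there. So the minimiser is an arithmetic
progression from `x` to `y`, whose short segments lie in `C` and cover `[x, y]`.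
-/

open Set Metric Function Topology

theorem exists_lt_mem_Icc_div {N : ℕ} (hN : 0 < N) {t : ℝ} (ht : t ∈ Icc (0 : ℝ) 1) :
    ∃ i < N, t ∈ Icc ((i : ℝ) / N) ((i + 1) / N) := by
  have hN' : (0 : ℝ) < N := by exact_mod_cast hN
  simp only [mem_Icc, div_le_iff₀ hN', le_div_iff₀ hN']
  rcases ht.2.lt_or_eq with ht1 | rfl
  · refine ⟨⌊t * N⌋₊, (Nat.floor_lt (by nlinarith [ht.1])).2 (by nlinarith), ?_, ?_⟩
    · exact Nat.floor_le (by nlinarith [ht.1])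
    · exact (Nat.lt_floor_add_one _).le
  · refine ⟨N - 1, by omega, ?_, ?_⟩ <;> simp [Nat.cast_sub hN]

section Chains

variable {X : Type*} [MetricSpace X]

/-- Indexing by `ℕ` and asking `w i ∈ C` for every `i` makes this a closed subset of the compact
product `Π i, C` when `C` is compact; the values past `N` play no role. -/
def deltaChains (C : Set X) (δ : ℝ) (N : ℕ) (x y : X) : Set (ℕ → X) :=
  {w | w 0 = x ∧ w N = y ∧ (∀ i, w i ∈ C) ∧ ∀ i < N, dist (w i) (w (i + 1)) ≤ δ}

theorem isCompact_deltaChains {C : Set X} (hC : IsCompact C) (δ : ℝ) (N : ℕ) (x y : X) :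
    IsCompact (deltaChains C δ N x y) := by
  refine (isCompact_univ_pi fun _ => hC).of_isClosed_subset ?_ fun w hw i _ => hw.2.2.1 i
  simp only [deltaChains, ofPred_and, ofPred_forall]
  exact (isClosed_eq (continuous_apply 0) continuous_const).inter <|
    (isClosed_eq (continuous_apply N) continuous_const).inter <|
    (isClosed_iInter fun i => hC.isClosed.preimage (continuous_apply i)).inter <|
    isClosed_iInter fun i => isClosed_iInter fun _ =>
      isClosed_le ((continuous_apply i).dist (continuous_apply (i + 1))) continuous_const

theorem JoinedIn.exists_deltaChains_nonempty {C : Set X} {x y : X} (h : JoinedIn C x y)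
    {δ : ℝ} (hδ : 0 < δ) : ∃ N, (deltaChains C δ N x y).Nonempty := by
  set γ := h.somePath
  obtain ⟨η, hη, hγ⟩ := Metric.uniformContinuous_iff.1 γ.uniformContinuous_extend δ hδ
  obtain ⟨n, hn⟩ := exists_nat_one_div_lt hη
  have hn₀ : (0 : ℝ) < n + 1 := by positivity
  refine ⟨n + 1, fun i => γ.extend (i / (n + 1)), by simp, by simp [hn₀.ne'], fun i => ?_,
    fun i _ => (hγ ?_).le⟩
  · obtain ⟨t, ht⟩ : γ.extend (i / (n + 1)) ∈ range γ := γ.extend_range ▸ mem_range_self _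
    simpa only [← ht] using h.somePath_mem t
  · rw [Real.dist_eq, abs_sub_comm, Nat.cast_succ, ← sub_div, add_sub_cancel_left,
      abs_of_pos (by positivity)]
    exact_mod_cast hn

end Chains

section Affine

variable {V : Type*} [AddCommGroup V] [Module ℝ V]

theorem eq_lineMap_of_sub_eq_sub {w : ℕ → V} {N : ℕ}
    (h : ∀ i, i + 2 ≤ N → w (i + 2) - w (i + 1) = w (i + 1) - w i) {i : ℕ} (hi : i ≤ N) :
    w i = AffineMap.lineMap (w 0) (w N) ((i : ℝ) / N) := by
  have hstep : ∀ i < N, w (i + 1) - w i = w 1 - w 0 := by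
    intro i hi
    induction i with
    | zero => rfl
    | succ i ih => rw [h i (by omega), ih (by omega)]
  have hw : ∀ i ≤ N, w i = w 0 + (i : ℝ) • (w 1 - w 0) := by
    intro i hi
    induction i with
    | zero => simp
    | succ i ih =>
      rw [← sub_add_cancel (w (i + 1)) (w i), hstep i (by omega), ih (by omega)]
      push_cast
      module
  rcases N.eq_zero_or_pos with rfl | hN
  · obtain rfl : i = 0 := by omega
    simp
  rw [hw i hi, hw N le_rfl, AffineMap.lineMap_apply_module, smul_add, smul_smul,
    div_mul_cancel₀ _ (by positivity)]
  module

theorem segment_subset_iUnion_segment_lineMap (x y : V) {N : ℕ} (hN : 0 < N) :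
    segment ℝ x y ⊆ ⋃ i < N, segment ℝ (AffineMap.lineMap x y ((i : ℝ) / N))
      (AffineMap.lineMap x y (((i : ℝ) + 1) / N)) := by
  rw [segment_eq_image_lineMap]
  rintro _ ⟨t, ht, rfl⟩
  obtain ⟨i, hi, hti⟩ := exists_lt_mem_Icc_div hN ht
  refine mem_iUnion₂.2 ⟨i, hi, ?_⟩
  rw [← image_segment, segment_eq_Icc (hti.1.trans hti.2)]
  exact mem_image_of_mem _ hti

end Affine

section Normed

variable {E : Type*} [NormedAddCommGroup E]

def chainEnergy (N : ℕ) (w : ℕ → E) : ℝ :=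
  ∑ i ∈ Finset.range N, ‖w (i + 1) - w i‖ ^ 2

theorem continuous_chainEnergy (N : ℕ) : Continuous (chainEnergy (E := E) N) := by
  unfold chainEnergy
  fun_prop

theorem chainEnergy_update_sub {N i : ℕ} (hi : i + 2 ≤ N) (w : ℕ → E) (p : E) :
    chainEnergy N (update w (i + 1) p) - chainEnergy N w =
      ‖p - w i‖ ^ 2 + ‖w (i + 2) - p‖ ^ 2 -
        (‖w (i + 1) - w i‖ ^ 2 + ‖w (i + 2) - w (i + 1)‖ ^ 2) := by
  unfold chainEnergy
  rw [← Finset.sum_sub_distrib, Finset.sum_eq_add_of_mem i (i + 1) (by simp; omega)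
    (by simp; omega) (by omega)]
  · simp only [update_self, ne_eq, Nat.left_eq_add, one_ne_zero, not_false_eq_true,
      update_of_ne, Nat.add_eq_left]
    ring
  · rintro c - ⟨hci, hci'⟩
    rw [update_of_ne (by omega), update_of_ne hci', sub_self]

variable [NormedSpace ℝ E]

theorem update_midpoint_mem_deltaChains {C : Set E} {δ : ℝ}
    (hC : ∀ p ∈ C, ∀ q ∈ C, dist p q ≤ 2 * δ → segment ℝ p q ⊆ C) {N i : ℕ} (hi : i + 2 ≤ N)
    {x y : E} {w : ℕ → E} (hw : w ∈ deltaChains C δ N x y) :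
    update w (i + 1) (midpoint ℝ (w i) (w (i + 2))) ∈ deltaChains C δ N x y := by
  obtain ⟨hw0, hwN, hwC, hgap⟩ := hw
  have hfar : dist (w i) (w (i + 2)) ≤ 2 * δ := by
    linarith [dist_triangle (w i) (w (i + 1)) (w (i + 2)), hgap i (by omega),
      hgap (i + 1) (by omega)]
  have hleft : dist (w i) (midpoint ℝ (w i) (w (i + 2))) ≤ δ := by
    rw [dist_left_midpoint, Real.norm_two]; linarith
  have hright : dist (midpoint ℝ (w i) (w (i + 2))) (w (i + 2)) ≤ δ := by
    rw [dist_midpoint_right, Real.norm_two]; linarith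
  refine ⟨by rwa [update_of_ne (by omega)], by rwa [update_of_ne (by omega)], fun k => ?_,
    fun k hk => ?_⟩
  · rcases eq_or_ne k (i + 1) with rfl | hk
    · rw [update_self]
      exact hC _ (hwC i) _ (hwC (i + 2)) hfar (midpoint_mem_segment _ _)
    · rw [update_of_ne hk]
      exact hwC k
  · rcases eq_or_ne k i with rfl | hki
    · rwa [update_self, update_of_ne (by omega)]
    rcases eq_or_ne k (i + 1) with rfl | hki'
    · rwa [update_self, update_of_ne (by omega)]
    rw [update_of_ne hki', update_of_ne (by omega)]
    exact hgap k hk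

theorem IsCompact.exists_pos_forall_segment_subset {K C : Set E} (hC : IsCompact C) (hCK : C ⊆ K)
    (hloc : ∀ x ∈ C, ∃ U : Set E, IsOpen U ∧ x ∈ U ∧ Convex ℝ (K ∩ U)) :
    ∃ ε > 0, ∀ p ∈ C, ∀ q ∈ K, dist p q < ε → segment ℝ p q ⊆ K := by
  choose! U hUo hxU hUc using hloc
  obtain ⟨ε, hε, hball⟩ := lebesgue_number_lemma_of_metric hC (fun z : C => hUo z z.2)
    fun z hz => mem_iUnion.2 ⟨⟨z, hz⟩, hxU z hz⟩
  refine ⟨ε, hε, fun p hp q hq hpq => ?_⟩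
  obtain ⟨z, hz⟩ := hball p hp
  have hq' : q ∈ ball p ε := mem_ball'.2 hpq
  have hconv : Convex ℝ (K ∩ U z ∩ ball p ε) := (hUc z z.2).inter (convex_ball p ε)
  refine (hconv.segment_subset ?_ ?_).trans (inter_subset_left.trans inter_subset_left)
  · exact ⟨⟨hCK hp, hz (mem_ball_self hε)⟩, mem_ball_self hε⟩
  · exact ⟨⟨hq, hz hq'⟩, hq'⟩

theorem IsPreconnected.isPathConnected_of_locallyConvex {K : Set E} (hK : IsPreconnected K)
    (hne : K.Nonempty) (hloc : ∀ x ∈ K, ∃ U : Set E, IsOpen U ∧ x ∈ U ∧ Convex ℝ (K ∩ U)) :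
    IsPathConnected K := by
  choose! U hUo hxU hUc using hloc
  have hbasis (x : K) : (𝓝 x).HasBasis (fun r : ℝ => 0 < r)
      fun r => Subtype.val ⁻¹' (ball (x : E) r ∩ U x) := by
    rw [nhds_subtype]
    refine Filter.HasBasis.comap _ ?_
    rw [← inf_eq_left.2 (Filter.le_principal_iff.2 ((hUo x x.2).mem_nhds (hxU x x.2)))]
    exact nhds_basis_ball.inf_principal _
  have : LocallyPathConnectedSpace K := .of_bases hbasis fun x r hr => by
    rw [Topology.IsInducing.subtypeVal.isPathConnected_iff, Subtype.image_preimage_coe,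
      inter_comm (ball _ _), ← inter_assoc]
    exact ((hUc x x.2).inter (convex_ball _ r)).isPathConnected
      ⟨x, ⟨x.2, hxU x x.2⟩, mem_ball_self hr⟩
  have : ConnectedSpace K := Subtype.connectedSpace ⟨hne, hK⟩
  exact isPathConnected_iff_pathConnectedSpace.2 (pathConnectedSpace_iff_connectedSpace.2 this)

end Normed

section InnerProduct

variable {E : Type*} [NormedAddCommGroup E] [InnerProductSpace ℝ E]

theorem norm_sub_sq_add_norm_sub_sq_eq_midpoint (a b c : E) :
    ‖b - a‖ ^ 2 + ‖c - b‖ ^ 2 =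
      ‖midpoint ℝ a c - a‖ ^ 2 + ‖c - midpoint ℝ a c‖ ^ 2 + ‖(c - b) - (b - a)‖ ^ 2 / 2 := by
  have hm : midpoint ℝ a c - a = (2⁻¹ : ℝ) • (c - a) := by
    rw [midpoint_eq_smul_add, invOf_eq_inv]; module
  have hm' : c - midpoint ℝ a c = (2⁻¹ : ℝ) • (c - a) := by
    rw [midpoint_eq_smul_add, invOf_eq_inv]; module
  have := parallelogram_law_with_norm ℝ (c - b) (b - a)
  rw [sub_add_sub_cancel] at this
  rw [hm, hm', norm_smul, mul_pow]
  norm_num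
  linarith

theorem sub_eq_sub_of_isMinOn_chainEnergy {C : Set E} {δ : ℝ}
    (hC : ∀ p ∈ C, ∀ q ∈ C, dist p q ≤ 2 * δ → segment ℝ p q ⊆ C) {N : ℕ} {x y : E}
    {w : ℕ → E} (hw : w ∈ deltaChains C δ N x y)
    (hmin : IsMinOn (chainEnergy N) (deltaChains C δ N x y) w) {i : ℕ} (hi : i + 2 ≤ N) :
    w (i + 2) - w (i + 1) = w (i + 1) - w i := by
  have hle := isMinOn_iff.1 hmin _ (update_midpoint_mem_deltaChains hC hi hw)
  have hupd := chainEnergy_update_sub hi w (midpoint ℝ (w i) (w (i + 2)))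
  have hmid := norm_sub_sq_add_norm_sub_sq_eq_midpoint (w i) (w (i + 1)) (w (i + 2))
  have hsq : ‖(w (i + 2) - w (i + 1)) - (w (i + 1) - w i)‖ ^ 2 = 0 :=
    le_antisymm (by linarith) (sq_nonneg _)
  rwa [sq_eq_zero_iff, norm_eq_zero, sub_eq_zero] at hsq

theorem IsCompact.segment_subset_of_deltaChains_nonempty {C : Set E} (hC : IsCompact C) {δ : ℝ}
    (hconv : ∀ p ∈ C, ∀ q ∈ C, dist p q ≤ 2 * δ → segment ℝ p q ⊆ C) {N : ℕ} {x y : E}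
    (hne : (deltaChains C δ N x y).Nonempty) : segment ℝ x y ⊆ C := by
  obtain ⟨w, hw, hmin⟩ :=
    (isCompact_deltaChains hC δ N x y).exists_isMinOn hne (continuous_chainEnergy N).continuousOn
  have hline : ∀ i ≤ N, w i = AffineMap.lineMap x y ((i : ℝ) / N) := fun i hi => by
    rw [← hw.1, ← hw.2.1]
    exact eq_lineMap_of_sub_eq_sub
      (fun j hj => sub_eq_sub_of_isMinOn_chainEnergy hconv hw hmin hj) hi
  obtain ⟨hw0, hwN, hwC, hgap⟩ := hw
  rcases N.eq_zero_or_pos with rfl | hN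
  · rw [← hw0, ← hwN, segment_same]
    exact singleton_subset_iff.2 (hwC 0)
  refine (segment_subset_iUnion_segment_lineMap x y hN).trans (iUnion₂_subset fun i hi => ?_)
  rw [← Nat.cast_succ, ← hline i hi.le, ← hline (i + 1) hi]
  exact hconv _ (hwC i) _ (hwC (i + 1))
    (by linarith [hgap i hi, dist_nonneg (x := w i) (y := w (i + 1))])

theorem IsClosed.convex_of_isPreconnected_of_locallyConvex [ProperSpace E] {K : Set E}
    (hK : IsClosed K) (hconn : IsPreconnected K)
    (hloc : ∀ x ∈ K, ∃ U : Set E, IsOpen U ∧ x ∈ U ∧ Convex ℝ (K ∩ U)) : Convex ℝ K := by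
  refine convex_iff_segment_subset.2 fun x hx y hy => ?_
  have hxy : JoinedIn K x y :=
    (hconn.isPathConnected_of_locallyConvex ⟨x, hx⟩ hloc).joinedIn x hx y hy
  obtain ⟨R, hR⟩ := (isCompact_range hxy.somePath.continuous).isBounded.subset_closedBall x
  set C := K ∩ closedBall x R
  have hC : IsCompact C := (isCompact_closedBall x R).inter_left hK
  obtain ⟨ε, hε, hεK⟩ := hC.exists_pos_forall_segment_subset inter_subset_left
    fun z hz => hloc z hz.1
  have hCconv : ∀ p ∈ C, ∀ q ∈ C, dist p q ≤ 2 * (ε / 3) → segment ℝ p q ⊆ C :=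
    fun p hp q hq hpq => subset_inter (hεK p hp q hq.1 (by linarith))
      ((convex_closedBall x R).segment_subset hp.2 hq.2)
  have hxyC : JoinedIn C x y :=
    ⟨hxy.somePath, fun t => ⟨hxy.somePath_mem t, hR (mem_range_self t)⟩⟩
  obtain ⟨N, hN⟩ := hxyC.exists_deltaChains_nonempty (by positivity : 0 < ε / 3)
  exact (hC.segment_subset_of_deltaChains_nonempty hCconv hN).trans inter_subset_left

end InnerProduct

/-- Beardon's theorem: a closed set `K ⊆ ℝ^d` is convex iff it is connected and
locally convex at every point. -/
theorem stmt3 (d : ℕ) (K : Set (EuclideanSpace ℝ (Fin d))) (hK : IsClosed K) :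
    Convex ℝ K ↔
      (IsPreconnected K ∧
        ∀ x ∈ K, ∃ U : Set (EuclideanSpace ℝ (Fin d)),
          IsOpen U ∧ x ∈ U ∧ Convex ℝ (K ∩ U)) :=
  ⟨fun h => ⟨h.isPreconnected, fun x _ => ⟨univ, isOpen_univ, mem_univ x, by rwa [inter_univ]⟩⟩,
    fun ⟨hconn, hloc⟩ => hK.convex_of_isPreconnected_of_locallyConvex hconn hloc⟩
end

section
/- Let P₁, P₂ be full-dimensional convex polytopes and F a codimension-2 face of P₁ × P₂ of the form F₁ × F₂ where F₁ is a facet of P₁ and F₂ is a facet of P₂. If P₁ and P₂ are centrally symmetric with centrally symmetric facets, then the belt of P₁ × P₂ determined by F consists of exactly four facets: F₁ × P₂, F₁′ × P₂, P₁ × F₂, and P₁ × F₂′, where F₁′, F₂′ are the facets antipodal to F₁, F₂. -/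
/-- `F` is a facet of `P`: a nonempty exposed face of codimension 1. -/
def IsFacet {E : Type*} [NormedAddCommGroup E] [NormedSpace ℝ E]
    (P F : Set E) : Prop :=
  IsExposed ℝ P F ∧ F.Nonempty ∧
    Module.finrank ℝ (vectorSpan ℝ F) + 1 = Module.finrank ℝ E

/-- The point reflection `x ↦ 2c - x` about `c`. -/
def pointReflection {E : Type*} [NormedAddCommGroup E] [NormedSpace ℝ E]
    (c : E) : E → E := fun x => (2 : ℝ) • c - x

/-!
A facet `G` of `P₁ × P₂` is exposed by a functional of the form `l₁ + l₂`, so it is the product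
of the faces of `P₁` and `P₂` exposed by `l₁` and `l₂`. As `G` has codimension one, one of these
faces is a whole factor: `G = G₁ × P₂` or `G = P₁ × G₂` with `Gᵢ` a facet of `Pᵢ`, and the belt
condition says exactly that `Gᵢ` is parallel to `Fᵢ`. Parallel facets of a full-dimensional body
are exposed by functionals with the same kernel, i.e. by proportional functionals; a positive
factor exposes the same facet and, when the body is centrally symmetric, a negative factor
exposes the antipodal one.
-/

open Module

section PointReflection

variable {E : Type*} [NormedAddCommGroup E] [NormedSpace ℝ E]

lemma pointReflection_eq_affineEquiv (c : E) :
    pointReflection c = AffineEquiv.pointReflection ℝ c := by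
  ext x
  simp [pointReflection, two_smul, Equiv.pointReflection_apply]
  abel

lemma pointReflection_involutive (c : E) : Function.Involutive (pointReflection c) := by
  simp [pointReflection_eq_affineEquiv, AffineEquiv.pointReflection_involutive]

lemma mem_image_pointReflection {c x : E} {S : Set E} :
    x ∈ pointReflection c '' S ↔ pointReflection c x ∈ S := by
  rw [(pointReflection_involutive c).image_eq_preimage_symm, Set.mem_preimage]

lemma vectorSpan_image_pointReflection (c : E) (S : Set E) :
    vectorSpan ℝ (pointReflection c '' S) = vectorSpan ℝ S := by
  rw [pointReflection_eq_affineEquiv, ← AffineEquiv.coe_toAffineMap, ← AffineMap.map_vectorSpan]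
  ext v
  simp [AffineEquiv.pointReflection, AffineEquiv.constVSub]

lemma map_pointReflection (l : E →L[ℝ] ℝ) (c x : E) :
    l (pointReflection c x) = 2 * l c - l x := by
  simp [pointReflection]

lemma image_pointReflection_toExposed {P : Set E} {c : E}
    (hsym : ∀ x, x ∈ P ↔ pointReflection c x ∈ P) (l : E →L[ℝ] ℝ) :
    pointReflection c '' l.toExposed P = (-l).toExposed P := by
  ext x
  simp only [mem_image_pointReflection, ContinuousLinearMap.toExposed, Set.mem_ofPred_eq, ← hsym,
    neg_apply, neg_le_neg_iff, map_pointReflection]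
  refine and_congr_right fun _ => ⟨fun h y hy => ?_, fun h y hy => ?_⟩ <;>
  · have := h _ ((hsym y).1 hy)
    rw [map_pointReflection] at this
    linarith

end PointReflection

namespace ContinuousLinearMap

variable {E F : Type*} [NormedAddCommGroup E] [NormedSpace ℝ E]
  [NormedAddCommGroup F] [NormedSpace ℝ F]

lemma toExposed_zero (A : Set E) : (0 : E →L[ℝ] ℝ).toExposed A = A := by
  simp [toExposed]

lemma toExposed_smul_of_pos (l : E →L[ℝ] ℝ) {t : ℝ} (ht : 0 < t) (A : Set E) :
    (t • l).toExposed A = l.toExposed A := by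
  simp [toExposed, mul_le_mul_iff_right₀ ht]

lemma toExposed_coprod (l₁ : E →L[ℝ] ℝ) (l₂ : F →L[ℝ] ℝ) (A : Set E) (B : Set F) :
    (l₁.coprod l₂).toExposed (A ×ˢ B) = l₁.toExposed A ×ˢ l₂.toExposed B := by
  ext ⟨x, y⟩
  simp only [toExposed, Set.mem_prod, Set.mem_ofPred_eq, coprod_apply, Prod.forall]
  constructor
  · rintro ⟨⟨hx, hy⟩, h⟩
    exact ⟨⟨hx, fun x' hx' => by simpa using h x' y ⟨hx', hy⟩⟩,
      ⟨hy, fun y' hy' => by simpa using h x y' ⟨hx, hy'⟩⟩⟩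
  · rintro ⟨⟨hx, h₁⟩, ⟨hy, h₂⟩⟩
    exact ⟨⟨hx, hy⟩, fun x' y' h => add_le_add (h₁ x' h.1) (h₂ y' h.2)⟩

lemma vectorSpan_toExposed_le_ker (l : E →L[ℝ] ℝ) (A : Set E) :
    vectorSpan ℝ (l.toExposed A) ≤ LinearMap.ker (l : E →ₗ[ℝ] ℝ) := by
  rw [vectorSpan_def, Submodule.span_le]
  rintro _ ⟨x, hx, y, hy, rfl⟩
  simp [le_antisymm (hy.2 x hx.1) (hx.2 y hy.1)]

lemma toExposed_eq_self_of_vectorSpan_eq_top {l : E →L[ℝ] ℝ} {A : Set E}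
    (h : vectorSpan ℝ (l.toExposed A) = ⊤) : l.toExposed A = A := by
  have hl : l = 0 := by
    ext x
    exact (h ▸ vectorSpan_toExposed_le_ker l A) (Submodule.mem_top (x := x))
  rw [hl, toExposed_zero]

lemma exists_eq_smul_of_ker_le {l m : E →L[ℝ] ℝ}
    (h : LinearMap.ker (l : E →ₗ[ℝ] ℝ) ≤ LinearMap.ker (m : E →ₗ[ℝ] ℝ)) :
    ∃ t : ℝ, m = t • l := by
  have hspan := mem_span_of_iInf_ker_le_ker (L := fun _ : Unit => (l : E →ₗ[ℝ] ℝ))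
    (K := (m : E →ₗ[ℝ] ℝ)) (by simpa using h)
  obtain ⟨t, ht⟩ := Submodule.mem_span_singleton.1 (by simpa using hspan)
  exact ⟨t, coe_injective (by simpa using ht.symm)⟩

end ContinuousLinearMap

open ContinuousLinearMap

section Prod

lemma Submodule.prod_le_prod_iff {R M N : Type*} [Semiring R] [AddCommMonoid M] [Module R M]
    [AddCommMonoid N] [Module R N] {p p' : Submodule R M} {q q' : Submodule R N} :
    p.prod q ≤ p'.prod q' ↔ p ≤ p' ∧ q ≤ q' :=
  ⟨fun h => ⟨fun v hv => (h (x := (v, 0)) ⟨hv, q.zero_mem⟩).1,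
    fun v hv => (h (x := (0, v)) ⟨p.zero_mem, hv⟩).2⟩,
    fun h => Submodule.prod_mono h.1 h.2⟩

variable {K V W : Type*} [Field K] [AddCommGroup V] [Module K V] [AddCommGroup W] [Module K W]
  [FiniteDimensional K V] [FiniteDimensional K W]

lemma Submodule.finrank_prod (p : Submodule K V) (q : Submodule K W) :
    finrank K (p.prod q) = finrank K p + finrank K q := by
  have := LinearMap.finrank_range_of_inj (f := p.subtype.prodMap q.subtype)
    (Prod.map_injective.2 ⟨p.injective_subtype, q.injective_subtype⟩)
  rwa [LinearMap.range_prodMap, Submodule.range_subtype, Submodule.range_subtype,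
    Module.finrank_prod] at this

lemma finrank_vectorSpan_prod {A : Set V} {B : Set W} (hA : A.Nonempty) (hB : B.Nonempty) :
    finrank K (vectorSpan K (A ×ˢ B)) =
      finrank K (vectorSpan K A) + finrank K (vectorSpan K B) := by
  rw [vectorSpan_prod_eq hA hB, Submodule.finrank_prod]

end Prod

section FullDimensional

variable {E F : Type*} [NormedAddCommGroup E] [NormedSpace ℝ E]
  [NormedAddCommGroup F] [NormedSpace ℝ F]

lemma vectorSpan_eq_top_of_nonempty_interior {P : Set E} (h : (interior P).Nonempty) :
    vectorSpan ℝ P = ⊤ :=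
  AffineSubspace.vectorSpan_eq_top_of_affineSpan_eq_top ℝ E E
    (affineSpan_eq_top_of_nonempty_interior (h.mono (interior_mono (subset_convexHull ℝ P))))

lemma vectorSpan_prod_le_vectorSpan_prod_left_iff {A C : Set E} {B Q : Set F}
    (hA : A.Nonempty) (hB : B.Nonempty) (hC : C.Nonempty) (hQ : (interior Q).Nonempty) :
    vectorSpan ℝ (A ×ˢ B) ≤ vectorSpan ℝ (C ×ˢ Q) ↔ vectorSpan ℝ A ≤ vectorSpan ℝ C := by
  rw [vectorSpan_prod_eq hA hB, vectorSpan_prod_eq hC (hQ.mono interior_subset),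
    vectorSpan_eq_top_of_nonempty_interior hQ, Submodule.prod_le_prod_iff]
  simp

lemma vectorSpan_prod_le_vectorSpan_prod_right_iff {A P : Set E} {B D : Set F}
    (hA : A.Nonempty) (hB : B.Nonempty) (hP : (interior P).Nonempty) (hD : D.Nonempty) :
    vectorSpan ℝ (A ×ˢ B) ≤ vectorSpan ℝ (P ×ˢ D) ↔ vectorSpan ℝ B ≤ vectorSpan ℝ D := by
  rw [vectorSpan_prod_eq hA hB, vectorSpan_prod_eq (hP.mono interior_subset) hD,
    vectorSpan_eq_top_of_nonempty_interior hP, Submodule.prod_le_prod_iff]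
  simp

end FullDimensional

namespace IsFacet

variable {E F : Type*} [NormedAddCommGroup E] [NormedSpace ℝ E]
  [NormedAddCommGroup F] [NormedSpace ℝ F]

lemma nonempty {P G : Set E} (hG : IsFacet P G) : G.Nonempty := hG.2.1

lemma exists_eq_toExposed {P G : Set E} (hG : IsFacet P G) :
    ∃ l : E →L[ℝ] ℝ, G = l.toExposed P :=
  hG.1 hG.nonempty

lemma image_pointReflection {P G : Set E} {c : E} (hsym : ∀ x, x ∈ P ↔ pointReflection c x ∈ P)
    (hG : IsFacet P G) : IsFacet P (pointReflection c '' G) := by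
  obtain ⟨l, rfl⟩ := hG.exists_eq_toExposed
  refine ⟨?_, hG.nonempty.image _, by rw [vectorSpan_image_pointReflection]; exact hG.2.2⟩
  rw [image_pointReflection_toExposed hsym]
  exact toExposed.isExposed

variable [FiniteDimensional ℝ E] [FiniteDimensional ℝ F]

lemma exists_ne_zero_eq_toExposed_vectorSpan_eq_ker {P G : Set E} (hP : (interior P).Nonempty)
    (hG : IsFacet P G) :
    ∃ l : E →L[ℝ] ℝ, l ≠ 0 ∧ G = l.toExposed P ∧
      vectorSpan ℝ G = LinearMap.ker (l : E →ₗ[ℝ] ℝ) := by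
  obtain ⟨l, rfl⟩ := hG.exists_eq_toExposed
  have hcodim := hG.2.2
  have hl : l ≠ 0 := by
    rintro rfl
    rw [toExposed_zero, vectorSpan_eq_top_of_nonempty_interior hP, finrank_top] at hcodim
    omega
  refine ⟨l, hl, rfl, Submodule.eq_of_le_of_finrank_eq (vectorSpan_toExposed_le_ker l P) ?_⟩
  have := Module.Dual.finrank_ker_add_one_of_ne_zero (f := (l : E →ₗ[ℝ] ℝ)) (by exact_mod_cast hl)
  omega

lemma eq_or_eq_image_pointReflection_of_vectorSpan_le {P G H : Set E} {c : E}
    (hP : (interior P).Nonempty) (hsym : ∀ x, x ∈ P ↔ pointReflection c x ∈ P)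
    (hG : IsFacet P G) (hH : IsFacet P H) (hle : vectorSpan ℝ G ≤ vectorSpan ℝ H) :
    H = G ∨ H = pointReflection c '' G := by
  obtain ⟨l, -, rfl, hlG⟩ := hG.exists_ne_zero_eq_toExposed_vectorSpan_eq_ker hP
  obtain ⟨m, hm, rfl, hmH⟩ := hH.exists_ne_zero_eq_toExposed_vectorSpan_eq_ker hP
  obtain ⟨t, rfl⟩ := exists_eq_smul_of_ker_le (hlG ▸ hmH ▸ hle)
  rcases lt_trichotomy t 0 with ht | rfl | ht
  · right
    rw [image_pointReflection_toExposed hsym, ← toExposed_smul_of_pos (-l) (neg_pos.2 ht),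
      neg_smul_neg]
  · exact absurd (zero_smul ℝ l) hm
  · exact Or.inl (toExposed_smul_of_pos l ht P)

lemma prod_left {P G : Set E} {Q : Set F} (hQ : (interior Q).Nonempty) (hG : IsFacet P G) :
    IsFacet (P ×ˢ Q) (G ×ˢ Q) := by
  obtain ⟨l, rfl⟩ := hG.exists_eq_toExposed
  have hQne : Q.Nonempty := hQ.mono interior_subset
  refine ⟨?_, hG.nonempty.prod hQne, ?_⟩
  · have h := toExposed.isExposed (l := l.coprod (0 : F →L[ℝ] ℝ)) (A := P ×ˢ Q)
    rwa [toExposed_coprod, toExposed_zero] at h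
  · rw [finrank_vectorSpan_prod hG.nonempty hQne, vectorSpan_eq_top_of_nonempty_interior hQ,
      finrank_top, finrank_prod, ← hG.2.2]
    omega

lemma prod_right {P : Set E} {Q G : Set F} (hP : (interior P).Nonempty) (hG : IsFacet Q G) :
    IsFacet (P ×ˢ Q) (P ×ˢ G) := by
  obtain ⟨l, rfl⟩ := hG.exists_eq_toExposed
  have hPne : P.Nonempty := hP.mono interior_subset
  refine ⟨?_, hPne.prod hG.nonempty, ?_⟩
  · have h := toExposed.isExposed (l := (0 : E →L[ℝ] ℝ).coprod l) (A := P ×ˢ Q)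
    rwa [toExposed_coprod, toExposed_zero] at h
  · rw [finrank_vectorSpan_prod hPne hG.nonempty, vectorSpan_eq_top_of_nonempty_interior hP,
      finrank_top, finrank_prod, ← hG.2.2]
    omega

lemma eq_prod_or_eq_prod {P : Set E} {Q : Set F} {G : Set (E × F)} (hG : IsFacet (P ×ˢ Q) G) :
    (∃ G₁, IsFacet P G₁ ∧ G = G₁ ×ˢ Q) ∨ (∃ G₂, IsFacet Q G₂ ∧ G = P ×ˢ G₂) := by
  obtain ⟨l, rfl⟩ := hG.exists_eq_toExposed
  set l₁ := l.comp (inl ℝ E F)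
  set l₂ := l.comp (inr ℝ E F)
  have hsplit : l.toExposed (P ×ˢ Q) = l₁.toExposed P ×ˢ l₂.toExposed Q := by
    rw [← toExposed_coprod, coprod_comp_inl_inr]
  obtain ⟨hne₁, hne₂⟩ := Set.prod_nonempty_iff.1 (hsplit ▸ hG.nonempty)
  have hcodim := hG.2.2
  rw [hsplit, finrank_vectorSpan_prod hne₁ hne₂, finrank_prod] at hcodim
  have hle₁ := (vectorSpan ℝ (l₁.toExposed P)).finrank_le
  have hle₂ := (vectorSpan ℝ (l₂.toExposed Q)).finrank_le
  by_cases h₂ : finrank ℝ (vectorSpan ℝ (l₂.toExposed Q)) = finrank ℝ F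
  · refine Or.inl ⟨_, ⟨toExposed.isExposed, hne₁, by omega⟩, ?_⟩
    rw [hsplit, toExposed_eq_self_of_vectorSpan_eq_top (Submodule.eq_top_of_finrank_eq h₂)]
  · have h₁ : finrank ℝ (vectorSpan ℝ (l₁.toExposed P)) = finrank ℝ E := by omega
    refine Or.inr ⟨_, ⟨toExposed.isExposed, hne₂, by omega⟩, ?_⟩
    rw [hsplit, toExposed_eq_self_of_vectorSpan_eq_top (Submodule.eq_top_of_finrank_eq h₁)]

end IsFacet

theorem stmt9_general (d₁ d₂ : ℕ)
    (P₁ : Set (EuclideanSpace ℝ (Fin d₁))) (P₂ : Set (EuclideanSpace ℝ (Fin d₂)))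
    (hfull₁ : (interior P₁).Nonempty) (hfull₂ : (interior P₂).Nonempty)
    (c₁ : EuclideanSpace ℝ (Fin d₁)) (c₂ : EuclideanSpace ℝ (Fin d₂))
    (hsym₁ : ∀ x, x ∈ P₁ ↔ pointReflection c₁ x ∈ P₁)
    (hsym₂ : ∀ x, x ∈ P₂ ↔ pointReflection c₂ x ∈ P₂)
    (F₁ : Set (EuclideanSpace ℝ (Fin d₁))) (F₂ : Set (EuclideanSpace ℝ (Fin d₂)))
    (hF₁ : IsFacet P₁ F₁) (hF₂ : IsFacet P₂ F₂) :
    {G : Set (EuclideanSpace ℝ (Fin d₁) × EuclideanSpace ℝ (Fin d₂)) |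
        IsFacet (P₁ ×ˢ P₂) G ∧ vectorSpan ℝ (F₁ ×ˢ F₂) ≤ vectorSpan ℝ G} =
      {F₁ ×ˢ P₂, (pointReflection c₁ '' F₁) ×ˢ P₂,
        P₁ ×ˢ F₂, P₁ ×ˢ (pointReflection c₂ '' F₂)} := by
  ext G
  simp only [Set.mem_ofPred_eq, Set.mem_insert_iff, Set.mem_singleton_iff]
  constructor
  · rintro ⟨hG, hle⟩
    rcases hG.eq_prod_or_eq_prod with ⟨G₁, hG₁, rfl⟩ | ⟨G₂, hG₂, rfl⟩
    · rw [vectorSpan_prod_le_vectorSpan_prod_left_iff hF₁.nonempty hF₂.nonempty hG₁.nonempty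
        hfull₂] at hle
      rcases hF₁.eq_or_eq_image_pointReflection_of_vectorSpan_le hfull₁ hsym₁ hG₁ hle
        with rfl | rfl <;> simp
    · rw [vectorSpan_prod_le_vectorSpan_prod_right_iff hF₁.nonempty hF₂.nonempty hfull₁
        hG₂.nonempty] at hle
      rcases hF₂.eq_or_eq_image_pointReflection_of_vectorSpan_le hfull₂ hsym₂ hG₂ hle
        with rfl | rfl <;> simp
  · have hF₁' := hF₁.image_pointReflection hsym₁
    have hF₂' := hF₂.image_pointReflection hsym₂
    rintro (rfl | rfl | rfl | rfl)
    · exact ⟨hF₁.prod_left hfull₂, (vectorSpan_prod_le_vectorSpan_prod_left_iff hF₁.nonempty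
        hF₂.nonempty hF₁.nonempty hfull₂).2 le_rfl⟩
    · exact ⟨hF₁'.prod_left hfull₂, (vectorSpan_prod_le_vectorSpan_prod_left_iff hF₁.nonempty
        hF₂.nonempty hF₁'.nonempty hfull₂).2 (vectorSpan_image_pointReflection c₁ F₁).ge⟩
    · exact ⟨hF₂.prod_right hfull₁, (vectorSpan_prod_le_vectorSpan_prod_right_iff hF₁.nonempty
        hF₂.nonempty hfull₁ hF₂.nonempty).2 le_rfl⟩
    · exact ⟨hF₂'.prod_right hfull₁, (vectorSpan_prod_le_vectorSpan_prod_right_iff hF₁.nonempty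
        hF₂.nonempty hfull₁ hF₂'.nonempty).2 (vectorSpan_image_pointReflection c₂ F₂).ge⟩

/-- The belt of `P₁ × P₂` determined by a codimension-2 face of the form
`F₁ × F₂` (where `Fᵢ` is a facet of `Pᵢ`) consists of exactly the four facets
`F₁ × P₂`, `F₁′ × P₂`, `P₁ × F₂`, `P₁ × F₂′`, where `Fᵢ′` is antipodal to `Fᵢ`. -/
theorem stmt9 (d₁ d₂ : ℕ)
    (P₁ : Set (EuclideanSpace ℝ (Fin d₁))) (P₂ : Set (EuclideanSpace ℝ (Fin d₂)))
    (hP₁ : ∃ S : Finset (EuclideanSpace ℝ (Fin d₁)), P₁ = convexHull ℝ (S : Set (EuclideanSpace ℝ (Fin d₁))))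
    (hP₂ : ∃ S : Finset (EuclideanSpace ℝ (Fin d₂)), P₂ = convexHull ℝ (S : Set (EuclideanSpace ℝ (Fin d₂))))
    (hfull₁ : (interior P₁).Nonempty) (hfull₂ : (interior P₂).Nonempty)
    (c₁ : EuclideanSpace ℝ (Fin d₁)) (c₂ : EuclideanSpace ℝ (Fin d₂))
    (hsym₁ : ∀ x, x ∈ P₁ ↔ pointReflection c₁ x ∈ P₁)
    (hsym₂ : ∀ x, x ∈ P₂ ↔ pointReflection c₂ x ∈ P₂)
    (hfsym₁ : ∀ F, IsFacet P₁ F → ∃ c, ∀ x, x ∈ F ↔ pointReflection c x ∈ F)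
    (hfsym₂ : ∀ F, IsFacet P₂ F → ∃ c, ∀ x, x ∈ F ↔ pointReflection c x ∈ F)
    (F₁ : Set (EuclideanSpace ℝ (Fin d₁))) (F₂ : Set (EuclideanSpace ℝ (Fin d₂)))
    (hF₁ : IsFacet P₁ F₁) (hF₂ : IsFacet P₂ F₂) :
    {G : Set (EuclideanSpace ℝ (Fin d₁) × EuclideanSpace ℝ (Fin d₂)) |
        IsFacet (P₁ ×ˢ P₂) G ∧ vectorSpan ℝ (F₁ ×ˢ F₂) ≤ vectorSpan ℝ G} =
      {F₁ ×ˢ P₂, (pointReflection c₁ '' F₁) ×ˢ P₂,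
        P₁ ×ˢ F₂, P₁ ×ˢ (pointReflection c₂ '' F₂)} :=
  stmt9_general d₁ d₂ P₁ P₂ hfull₁ hfull₂ c₁ c₂ hsym₁ hsym₂ F₁ F₂ hF₁ hF₂
end

section
/- Let P be a parallelohedron tiling ℝ^d by translates along a lattice Λ, and suppose the centers lattice decomposes as Λ = Λ₁ ⊕ Λ₂ (direct sum of subgroups) such that the set P + Λ₁ is convex. Then P + Λ₁ = span(Λ₁) ⊕ π(P) (Minkowski direct sum), where π is the linear projection of ℝ^d onto span(Λ₂) along span(Λ₁). -/
open Pointwise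

/-! A convex set `Q` with `Q + Λ₁ ⊆ Q` is invariant under all of `span Λ₁`: for `λ ∈ Λ₁` the
segments from `x + mλ` to `x + (m+1)λ` (`m ∈ ℤ`) cover the whole line `x + ℝλ`. Hence
`P + Λ₁ = P + span Λ₁`, and `p + span Λ₁ = π p + span Λ₁` because `p - π p ∈ span Λ₁`. -/

/-- Face-to-face tiling of the whole space by translates of `P` over the
lattice `L`: translates cover the space, distinct translates have disjoint
interiors, and any nonempty intersection of two tiles is a face of each. -/
def IsFaceToFaceTiling {E : Type*} [NormedAddCommGroup E] [NormedSpace ℝ E]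
    (P : Set E) (L : AddSubgroup E) : Prop :=
  (⋃ l ∈ (L : Set E), l +ᵥ P) = Set.univ ∧
  (∀ l₁ ∈ L, ∀ l₂ ∈ L, l₁ ≠ l₂ →
      interior (l₁ +ᵥ P) ∩ interior (l₂ +ᵥ P) = ∅) ∧
  (∀ l₁ ∈ L, ∀ l₂ ∈ L, ((l₁ +ᵥ P) ∩ (l₂ +ᵥ P)).Nonempty →
      IsExtreme ℝ (l₁ +ᵥ P) ((l₁ +ᵥ P) ∩ (l₂ +ᵥ P)))

section

variable {𝕜 E : Type*} [Ring 𝕜] [LinearOrder 𝕜] [IsStrictOrderedRing 𝕜] [FloorRing 𝕜]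
  [AddCommGroup E] [Module 𝕜 E] {s : Set E}

theorem Convex.add_smul_mem_of_forall_add_zsmul_mem (hs : Convex 𝕜 s) {x v : E}
    (h : ∀ m : ℤ, x + m • v ∈ s) (t : 𝕜) : x + t • v ∈ s := by
  have hnext : x + ⌊t⌋ • v + v ∈ s := by simpa [add_assoc, add_zsmul] using h (⌊t⌋ + 1)
  have hstep := hs.add_smul_mem (h ⌊t⌋) hnext ⟨Int.fract_nonneg t, (Int.fract_lt_one t).le⟩
  rwa [add_assoc, ← Int.cast_smul_eq_zsmul 𝕜, ← add_smul, Int.floor_add_fract] at hstep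

theorem Convex.add_span_subset (hs : Convex 𝕜 s) {G : AddSubgroup E}
    (hG : s + (G : Set E) ⊆ s) : s + (Submodule.span 𝕜 (G : Set E) : Set E) ⊆ s := by
  -- Quantifying over all multiples `t • v` makes the predicate stable under scalar multiplication.
  suffices h : ∀ v ∈ Submodule.span 𝕜 (G : Set E), ∀ t : 𝕜, ∀ x ∈ s, x + t • v ∈ s by
    rintro _ ⟨x, hx, v, hv, rfl⟩
    simpa using h v hv 1 x hx
  intro v hv
  induction hv using Submodule.span_induction with
  | mem g hg =>
    exact fun t x hx => hs.add_smul_mem_of_forall_add_zsmul_mem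
      (fun m => hG (Set.add_mem_add hx (zsmul_mem hg m))) t
  | zero => simp
  | add v w _ _ hv hw =>
    intro t x hx
    simpa [smul_add, add_assoc] using hw t _ (hv t x hx)
  | smul a v _ hv =>
    intro t x hx
    simpa [smul_smul] using hv (t * a) x hx

theorem Convex.add_addSubgroup_eq_add_span {P : Set E} {G : AddSubgroup E}
    (hconv : Convex 𝕜 (P + (G : Set E))) :
    P + (G : Set E) = P + Submodule.span 𝕜 (G : Set E) := by
  have hG_invariant : P + (G : Set E) + G ⊆ P + G := by
    rw [add_assoc]
    exact Set.add_subset_add_left (AddSubmonoid.coe_add_self_eq G.toAddSubmonoid).subset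
  refine (Set.add_subset_add_left Submodule.subset_span).antisymm ?_
  calc P + (Submodule.span 𝕜 (G : Set E) : Set E)
      ⊆ P + G + Submodule.span 𝕜 (G : Set E) :=
        Set.add_subset_add_right (Set.subset_add_left P G.zero_mem)
    _ ⊆ P + G := hconv.add_span_subset hG_invariant

end

theorem Submodule.coe_add_image_projection {R E : Type*} [Ring R] [AddCommGroup E] [Module R E]
    {p q : Submodule R E} (h : IsCompl p q) (s : Set E) :
    (q : Set E) + p.projection q h '' s = s + q := by
  ext x
  constructor
  · rintro ⟨v, hv, _, ⟨y, hy, rfl⟩, rfl⟩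
    exact ⟨y, hy, v - (y - p.projection q h y), q.sub_mem hv (sub_projection_mem h y),
      by beta_reduce; abel⟩
  · rintro ⟨y, hy, v, hv, rfl⟩
    exact ⟨y - p.projection q h y + v, q.add_mem (sub_projection_mem h y) hv,
      _, ⟨y, hy, rfl⟩, by beta_reduce; abel⟩

theorem stmt10_general (d : ℕ) (P : Set (EuclideanSpace ℝ (Fin d)))
    (Λ₁ : AddSubgroup (EuclideanSpace ℝ (Fin d)))
    (V₁ V₂ : Submodule ℝ (EuclideanSpace ℝ (Fin d)))
    (hV₁ : V₁ = Submodule.span ℝ (Λ₁ : Set (EuclideanSpace ℝ (Fin d))))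
    (hcompl : IsCompl V₂ V₁)
    (hconv : Convex ℝ (P + (Λ₁ : Set (EuclideanSpace ℝ (Fin d))))) :
    P + (Λ₁ : Set (EuclideanSpace ℝ (Fin d))) =
      (V₁ : Set (EuclideanSpace ℝ (Fin d))) +
        (fun x => ((Submodule.linearProjOfIsCompl V₂ V₁ hcompl) x :
          EuclideanSpace ℝ (Fin d))) '' P := by
  subst hV₁
  rw [hconv.add_addSubgroup_eq_add_span, ← Submodule.coe_add_image_projection hcompl]
  rfl

/-- If `Λ = Λ₁ ⊕ Λ₂` and `P + Λ₁` is convex, then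
`P + Λ₁ = span Λ₁ ⊕ π(P)`, where `π` projects onto `span Λ₂` along `span Λ₁`. -/
theorem stmt10 (d : ℕ) (P : Set (EuclideanSpace ℝ (Fin d)))
    (hpoly : ∃ S : Finset (EuclideanSpace ℝ (Fin d)), P = convexHull ℝ (S : Set (EuclideanSpace ℝ (Fin d))))
    (Λ Λ₁ Λ₂ : AddSubgroup (EuclideanSpace ℝ (Fin d)))
    (htile : IsFaceToFaceTiling P Λ)
    (hsup : Λ₁ ⊔ Λ₂ = Λ) (hinf : Λ₁ ⊓ Λ₂ = ⊥)
    (V₁ V₂ : Submodule ℝ (EuclideanSpace ℝ (Fin d)))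
    (hV₁ : V₁ = Submodule.span ℝ (Λ₁ : Set (EuclideanSpace ℝ (Fin d))))
    (hV₂ : V₂ = Submodule.span ℝ (Λ₂ : Set (EuclideanSpace ℝ (Fin d))))
    (hcompl : IsCompl V₂ V₁)
    (hconv : Convex ℝ (P + (Λ₁ : Set (EuclideanSpace ℝ (Fin d))))) :
    P + (Λ₁ : Set (EuclideanSpace ℝ (Fin d))) =
      (V₁ : Set (EuclideanSpace ℝ (Fin d))) +
        (fun x => ((Submodule.linearProjOfIsCompl V₂ V₁ hcompl) x :
          EuclideanSpace ℝ (Fin d))) '' P :=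
  stmt10_general d P Λ₁ V₁ V₂ hV₁ hcompl hconv
end

section
/- Let P ⊆ ℝ^d be a convex body, Λ₁ a full-rank lattice in a subspace V₁, and x a point with x ∈ π(P) where π is the projection along V₁ onto a complement V₂. If P + Λ₁ is convex, then the entire affine line/subspace x + V₁ is contained in P + Λ₁. -/
open Pointwise

/-!
The convex hull of an additive subgroup `G` of a real vector space is again an additive
subgroup (`convexHull_add`, `convexHull_neg`), and a convex additive subgroup is closed under
real scalars, so `convexHull ℝ G = span ℝ G`. Hence if `P + G` is convex it equals
`convexHull P + span G`, which contains `p + span G` for every `p ∈ P`. A point `x` of `π(P)`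
differs from some `p ∈ P` by a vector of `V₁ = span Λ₁`, so `x + V₁ = p + V₁ ⊆ P + Λ₁`.
-/

section ConvexHullAddSubgroup

variable {E : Type*} [AddCommGroup E] [Module ℝ E]

theorem AddSubgroup.smul_mem_of_convex (S : AddSubgroup E) (hS : Convex ℝ (S : Set E))
    (c : ℝ) {a : E} (ha : a ∈ S) : c • a ∈ S := by
  wlog hc : 0 ≤ c generalizing c
  · simpa using S.neg_mem (this (-c) (by linarith))
  obtain ⟨n, hn⟩ := exists_nat_ge c
  rcases hc.eq_or_lt with rfl | hc
  · simp
  have hn₀ : (0 : ℝ) < n := hc.trans_le hn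
  have hseg : (c / n) • ((n : ℝ) • a) ∈ S :=
    hS.smul_mem_of_zero_mem S.zero_mem (by rw [Nat.cast_smul_eq_nsmul]; exact S.nsmul_mem ha n)
      ⟨by positivity, div_le_one_of_le₀ hn hn₀.le⟩
  rwa [smul_smul, div_mul_cancel₀ _ hn₀.ne'] at hseg

def AddSubgroup.convexHull (G : AddSubgroup E) : AddSubgroup E where
  carrier := _root_.convexHull ℝ (G : Set E)
  zero_mem' := subset_convexHull ℝ _ G.zero_mem
  add_mem' {a b} ha hb := by
    have hGG : (G : Set E) + G = G := by simp
    rw [← hGG, convexHull_add]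
    exact Set.add_mem_add ha hb
  neg_mem' {a} ha := by
    have hG : -(G : Set E) = G := by simp
    rw [← hG, convexHull_neg]
    exact Set.neg_mem_neg.2 ha

theorem convexHull_addSubgroup_eq_span (G : AddSubgroup E) :
    convexHull ℝ (G : Set E) = Submodule.span ℝ (G : Set E) := by
  refine (convexHull_min Submodule.subset_span (Submodule.span ℝ _).convex).antisymm ?_
  let H : Submodule ℝ E :=
    { G.convexHull with
      smul_mem' := fun c _ ha => G.convexHull.smul_mem_of_convex (convex_convexHull ℝ _) c ha }
  exact Submodule.span_le (p := H) |>.2 (subset_convexHull ℝ _)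

end ConvexHullAddSubgroup

theorem add_mem_add_addSubgroup_of_convex {E : Type*} [AddCommGroup E] [Module ℝ E]
    {P : Set E} {G : AddSubgroup E} (hconv : Convex ℝ (P + (G : Set E))) {p w : E} (hp : p ∈ P)
    (hw : w ∈ Submodule.span ℝ (G : Set E)) : p + w ∈ P + (G : Set E) := by
  rw [← hconv.convexHull_eq, convexHull_add, convexHull_addSubgroup_eq_span]
  exact Set.add_mem_add (subset_convexHull ℝ _ hp) hw

theorem stmt12_general (d : ℕ)
    (V₁ V₂ : Submodule ℝ (EuclideanSpace ℝ (Fin d)))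
    (hcompl : IsCompl V₂ V₁)
    (P : Set (EuclideanSpace ℝ (Fin d)))
    (Λ₁ : AddSubgroup (EuclideanSpace ℝ (Fin d)))
    (hfull : Submodule.span ℝ (Λ₁ : Set (EuclideanSpace ℝ (Fin d))) = V₁)
    (hconv : Convex ℝ (P + (Λ₁ : Set (EuclideanSpace ℝ (Fin d)))))
    (x : EuclideanSpace ℝ (Fin d))
    (hx : x ∈ (fun p => ((Submodule.linearProjOfIsCompl V₂ V₁ hcompl) p :
      EuclideanSpace ℝ (Fin d))) '' P) :
    ∀ v ∈ V₁, x + v ∈ P + (Λ₁ : Set (EuclideanSpace ℝ (Fin d))) := by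
  intro v hv
  obtain ⟨p, hp, rfl⟩ := hx
  change V₂.projection V₁ hcompl p + v ∈ _
  have hfiber : p - V₂.projection V₁ hcompl p ∈ V₁ := Submodule.sub_projection_mem hcompl p
  have hsum : V₂.projection V₁ hcompl p + v = p + (v - (p - V₂.projection V₁ hcompl p)) := by
    abel
  rw [hsum]
  exact add_mem_add_addSubgroup_of_convex hconv hp (hfull ▸ V₁.sub_mem hv hfiber)

/-- If `P` is a convex body, `Λ₁` a full-rank lattice in `V₁`, `x ∈ π(P)` for the
projection `π` onto `V₂` along `V₁`, and `P + Λ₁` is convex, then the whole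
affine subspace `x + V₁` lies in `P + Λ₁`. -/
theorem stmt12 (d : ℕ)
    (V₁ V₂ : Submodule ℝ (EuclideanSpace ℝ (Fin d)))
    (hcompl : IsCompl V₂ V₁)
    (P : Set (EuclideanSpace ℝ (Fin d)))
    (hPc : IsCompact P) (hPconv : Convex ℝ P) (hPint : (interior P).Nonempty)
    (Λ₁ : AddSubgroup (EuclideanSpace ℝ (Fin d)))
    (hΛsub : (Λ₁ : Set (EuclideanSpace ℝ (Fin d))) ⊆ (V₁ : Set (EuclideanSpace ℝ (Fin d))))
    (hdisc : DiscreteTopology Λ₁)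
    (hfull : Submodule.span ℝ (Λ₁ : Set (EuclideanSpace ℝ (Fin d))) = V₁)
    (hconv : Convex ℝ (P + (Λ₁ : Set (EuclideanSpace ℝ (Fin d)))))
    (x : EuclideanSpace ℝ (Fin d))
    (hx : x ∈ (fun p => ((Submodule.linearProjOfIsCompl V₂ V₁ hcompl) p :
      EuclideanSpace ℝ (Fin d))) '' P) :
    ∀ v ∈ V₁, x + v ∈ P + (Λ₁ : Set (EuclideanSpace ℝ (Fin d))) :=
  stmt12_general d V₁ V₂ hcompl P Λ₁ hfull hconv x hx
end
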